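/- arXiv:1804.08169 — 8 statements merged into one kernel-verified Lean document; each statement's English description precedes it below -/
import Mathlib

section
/- On ℝ^{2n} with canonical Poisson bracket, suppose for each i = 1,…,n, the functions Hᵢ and Uᵢ depend only on the conjugate pair (xⁱ, pᵢ), with Uᵢ depending only on xⁱ. Assume U := U₁ + ⋯ + Uₙ is nowhere zero and let H = (H₁ + ⋯ + Hₙ)/(2U). Then for each i, the quantity κᵢ = 2UᵢH − Hᵢ satisfies {H, κᵢ} = 0. -/
/-- Canonical Poisson bracket on ℝⁿ × ℝⁿ (positions, momenta). -/
noncomputable def pb {n : ℕ} (f g : (Fin n → ℝ) × (Fin n → ℝ) → ℝ) :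
    (Fin n → ℝ) × (Fin n → ℝ) → ℝ :=
  fun z => ∑ i, (fderiv ℝ f z (Pi.single i 1, 0) * fderiv ℝ g z (0, Pi.single i 1)
    - fderiv ℝ f z (0, Pi.single i 1) * fderiv ℝ g z (Pi.single i 1, 0))

private lemma hasDerivAt_line {E : Type*} [NormedAddCommGroup E] [NormedSpace ℝ E]
    {f : E → ℝ} {z : E} (v : E) (hf : DifferentiableAt ℝ f z) :
    HasDerivAt (fun t : ℝ => f (z + t • v)) (fderiv ℝ f z v) 0 := by
  have hline : HasDerivAt (fun t : ℝ => z + t • v) v 0 := by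
    simpa using ((hasDerivAt_id (0 : ℝ)).smul_const v).const_add z
  have h0 : z + (0 : ℝ) • v = z := by simp
  have := (h0 ▸ hf.hasFDerivAt).comp_hasDerivAt (0 : ℝ) hline
  rw [h0] at this
  exact this

private lemma fderiv_dir_zero {E : Type*} [NormedAddCommGroup E] [NormedSpace ℝ E]
    {f : E → ℝ} {z : E} (v : E) (hf : DifferentiableAt ℝ f z)
    (hc : ∀ t : ℝ, f (z + t • v) = f z) : fderiv ℝ f z v = 0 := by
  have h1 := hasDerivAt_line v hf
  have h2 : HasDerivAt (fun t : ℝ => f (z + t • v)) 0 0 := by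
    have : (fun t : ℝ => f (z + t • v)) = fun _ => f z := funext hc
    rw [this]; exact hasDerivAt_const 0 (f z)
  exact h1.unique h2

/-- n-variable Carter theorem: if each Hᵢ depends only on (xⁱ, pᵢ), each Uᵢ only on xⁱ,
U = ΣUᵢ is nowhere zero, and H = (ΣHᵢ)/(2U), then each κᵢ = 2UᵢH − Hᵢ satisfies
{H, κᵢ} = 0. -/
theorem stmt2 {n : ℕ} (H U : Fin n → (Fin n → ℝ) × (Fin n → ℝ) → ℝ)
    (hHs : ∀ i, ContDiff ℝ (⊤ : ℕ∞) (H i)) (hUs : ∀ i, ContDiff ℝ (⊤ : ℕ∞) (U i))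
    (hHdep : ∀ i, ∃ h : ℝ × ℝ → ℝ, ∀ z, H i z = h (z.1 i, z.2 i))
    (hUdep : ∀ i, ∃ u : ℝ → ℝ, ∀ z, U i z = u (z.1 i))
    (hU : ∀ z, (∑ j, U j z) ≠ 0) :
    ∀ i z, pb (fun w => (∑ j, H j w) / (2 * ∑ j, U j w))
      (fun w => 2 * U i w * ((∑ j, H j w) / (2 * ∑ j, U j w)) - H i w) z = 0 := by
  intro i z
  have hHd : ∀ j w, DifferentiableAt ℝ (H j) w := fun j w =>
    ((hHs j).differentiable (by simp)).differentiableAt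
  have hUd : ∀ j w, DifferentiableAt ℝ (U j) w := fun j w =>
    ((hUs j).differentiable (by simp)).differentiableAt
  set S : (Fin n → ℝ) × (Fin n → ℝ) → ℝ := fun w => ∑ j, H j w with hSdef
  set T : (Fin n → ℝ) × (Fin n → ℝ) → ℝ := fun w => ∑ j, U j w with hTdef
  have hSd : ∀ w, DifferentiableAt ℝ S w := fun w =>
    DifferentiableAt.fun_sum fun j _ => hHd j w
  have hTd : ∀ w, DifferentiableAt ℝ T w := fun w =>
    DifferentiableAt.fun_sum fun j _ => hUd j w
  have hT2 : ∀ w, (2 : ℝ) * T w ≠ 0 := fun w => by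
    have := hU w; simpa [hTdef] using mul_ne_zero two_ne_zero this
  -- zero directional derivatives
  have hHx0 : ∀ j k : Fin n, j ≠ k → ∀ w,
      fderiv ℝ (H j) w ((Pi.single k 1 : Fin n → ℝ), (0 : Fin n → ℝ)) = 0 := by
    intro j k hjk w
    obtain ⟨h, hh⟩ := hHdep j
    refine fderiv_dir_zero _ (hHd j w) fun t => ?_
    rw [hh, hh]
    simp [Pi.single_eq_of_ne hjk]
  have hHp0 : ∀ j k : Fin n, j ≠ k → ∀ w,
      fderiv ℝ (H j) w ((0 : Fin n → ℝ), (Pi.single k 1 : Fin n → ℝ)) = 0 := by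
    intro j k hjk w
    obtain ⟨h, hh⟩ := hHdep j
    refine fderiv_dir_zero _ (hHd j w) fun t => ?_
    rw [hh, hh]
    simp [Pi.single_eq_of_ne hjk]
  have hUx0 : ∀ j k : Fin n, j ≠ k → ∀ w,
      fderiv ℝ (U j) w ((Pi.single k 1 : Fin n → ℝ), (0 : Fin n → ℝ)) = 0 := by
    intro j k hjk w
    obtain ⟨u, hu⟩ := hUdep j
    refine fderiv_dir_zero _ (hUd j w) fun t => ?_
    rw [hu, hu]
    simp [Pi.single_eq_of_ne hjk]
  have hUp0 : ∀ (j k : Fin n) (w),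
      fderiv ℝ (U j) w ((0 : Fin n → ℝ), (Pi.single k 1 : Fin n → ℝ)) = 0 := by
    intro j k w
    obtain ⟨u, hu⟩ := hUdep j
    refine fderiv_dir_zero _ (hUd j w) fun t => ?_
    rw [hu, hu]
    simp
  -- directional derivatives of sums
  have hSder : ∀ (v) (w), fderiv ℝ S w v = ∑ j, fderiv ℝ (H j) w v := by
    intro v w
    rw [hSdef, fderiv_fun_sum fun j _ => hHd j w]
    simp
  have hTder : ∀ (v) (w), fderiv ℝ T w v = ∑ j, fderiv ℝ (U j) w v := by
    intro v w
    rw [hTdef, fderiv_fun_sum fun j _ => hUd j w]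
    simp
  have hSx : ∀ k : Fin n, fderiv ℝ S z ((Pi.single k 1 : Fin n → ℝ), 0)
      = fderiv ℝ (H k) z ((Pi.single k 1 : Fin n → ℝ), 0) := by
    intro k
    rw [hSder]
    exact Finset.sum_eq_single_of_mem k (Finset.mem_univ k)
      (fun j _ hjk => hHx0 j k hjk z)
  have hSp : ∀ k : Fin n, fderiv ℝ S z ((0 : Fin n → ℝ), Pi.single k 1)
      = fderiv ℝ (H k) z ((0 : Fin n → ℝ), Pi.single k 1) := by
    intro k
    rw [hSder]
    exact Finset.sum_eq_single_of_mem k (Finset.mem_univ k)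
      (fun j _ hjk => hHp0 j k hjk z)
  have hTx : ∀ k : Fin n, fderiv ℝ T z ((Pi.single k 1 : Fin n → ℝ), 0)
      = fderiv ℝ (U k) z ((Pi.single k 1 : Fin n → ℝ), 0) := by
    intro k
    rw [hTder]
    exact Finset.sum_eq_single_of_mem k (Finset.mem_univ k)
      (fun j _ hjk => hUx0 j k hjk z)
  have hTp : ∀ k : Fin n, fderiv ℝ T z ((0 : Fin n → ℝ), Pi.single k 1) = 0 := by
    intro k
    rw [hTder]
    exact Finset.sum_eq_zero fun j _ => hUp0 j k z
  -- the big Hamiltonian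
  set Hb : (Fin n → ℝ) × (Fin n → ℝ) → ℝ := fun w => S w / (2 * T w) with hHbdef
  have hHbd : ∀ w, DifferentiableAt ℝ Hb w := by
    intro w
    rw [hHbdef]
    simp only [div_eq_mul_inv]
    exact (hSd w).mul (((hTd w).const_mul 2).inv (hT2 w))
  -- directional derivative of Hb
  have hHbder : ∀ v w, fderiv ℝ Hb w v =
      (fderiv ℝ S w v * (2 * T w) - S w * (2 * fderiv ℝ T w v)) / (2 * T w) ^ 2 := by
    intro v w
    have h1 := hasDerivAt_line v (hHbd w)
    have hS' := hasDerivAt_line v (hSd w)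
    have hT' := hasDerivAt_line v (hTd w)
    have h2 : HasDerivAt (fun t : ℝ => Hb (w + t • v))
        ((fderiv ℝ S w v * (2 * T w) - S w * (2 * fderiv ℝ T w v)) / (2 * T w) ^ 2) 0 := by
      have := hS'.fun_div (hT'.const_mul 2) (by simpa using hT2 w)
      simpa [hHbdef] using this
    exact h1.unique h2
  -- directional derivative of kappa
  set K : (Fin n → ℝ) × (Fin n → ℝ) → ℝ := fun w => 2 * U i w * Hb w - H i w with hKdef
  have hKder : ∀ v w, fderiv ℝ K w v =
      (2 * fderiv ℝ (U i) w v * Hb w + 2 * U i w * fderiv ℝ Hb w v)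
        - fderiv ℝ (H i) w v := by
    intro v w
    have hKd : DifferentiableAt ℝ K w := by
      exact (((hUd i w).const_mul 2).mul (hHbd w)).sub (hHd i w)
    have h1 := hasDerivAt_line v hKd
    have h2 : HasDerivAt (fun t : ℝ => K (w + t • v))
        ((2 * fderiv ℝ (U i) w v * Hb w + 2 * U i w * fderiv ℝ Hb w v)
          - fderiv ℝ (H i) w v) 0 := by
      have hU' := (hasDerivAt_line v (hUd i w)).const_mul (2 : ℝ)
      have := (hU'.mul (hasDerivAt_line v (hHbd w))).sub (hasDerivAt_line v (hHd i w))
      simpa [hKdef, Pi.mul_def, Pi.sub_def, mul_comm, mul_assoc, mul_left_comm] using this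
    exact h1.unique h2
  -- now compute
  show ∑ k : Fin n, (fderiv ℝ Hb z (Pi.single k 1, 0) * fderiv ℝ K z (0, Pi.single k 1)
    - fderiv ℝ Hb z (0, Pi.single k 1) * fderiv ℝ K z (Pi.single k 1, 0)) = 0
  refine Finset.sum_eq_zero fun k _ => ?_
  simp only [hKder, hHbder]
  simp only [hSx, hSp, hTx, hTp, hUp0, hHbdef]
  by_cases hik : i = k
  · subst hik
    have hT0 : T z ≠ 0 := hU z
    field_simp
    ring
  · simp only [hHx0 i k hik z, hHp0 i k hik z, hUx0 i k hik z]
    ring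
end

section
/- On ℝ⁶ with coordinates (x₁,x₂,x₃,p₁,p₂,p₃) and canonical Poisson bracket, suppose U₁, H₁ depend only on (x₁,p₁) with U₁ a function of x₁ alone, and U₂₃, H₂₃ depend only on (x₂,x₃,p₂,p₃) with U₂₃ a function of (x₂,x₃) alone. If U₁ + U₂₃ is nowhere zero and H = (H₁ + H₂₃)/(2(U₁ + U₂₃)), then κ = (U₁ H₂₃ − U₂₃ H₁)/(U₁ + U₂₃) Poisson-commutes with H. -/
private lemma fline {f : (Fin 3 → ℝ) × (Fin 3 → ℝ) → ℝ} {z : (Fin 3 → ℝ) × (Fin 3 → ℝ)}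
    (hf : DifferentiableAt ℝ f z) (v : (Fin 3 → ℝ) × (Fin 3 → ℝ)) :
    HasDerivAt (fun t : ℝ => f (z + t • v)) (fderiv ℝ f z v) 0 := by
  have h1 : HasDerivAt (fun t : ℝ => z + t • v) v 0 := by
    simpa using ((hasDerivAt_id (0:ℝ)).smul_const v).const_add z
  have h0 : HasFDerivAt f (fderiv ℝ f z) (z + (0:ℝ) • v) := by
    rw [show z + (0:ℝ) • v = z by simp]; exact hf.hasFDerivAt
  exact h0.comp_hasDerivAt 0 h1

private lemma dzero {f : (Fin 3 → ℝ) × (Fin 3 → ℝ) → ℝ} (hf : ContDiff ℝ (⊤ : ℕ∞) f)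
    (z v : (Fin 3 → ℝ) × (Fin 3 → ℝ)) (h : ∀ t : ℝ, f (z + t • v) = f z) :
    fderiv ℝ f z v = 0 := by
  have h2 := fline (hf.differentiable (by simp) z) v
  have h3 : HasDerivAt (fun t : ℝ => f (z + t • v)) 0 0 := by
    have : (fun t : ℝ => f (z + t • v)) = fun _ => f z := funext h
    rw [this]; exact hasDerivAt_const _ _
  exact h2.unique h3

private lemma keydiv {f g : (Fin 3 → ℝ) × (Fin 3 → ℝ) → ℝ} {z : (Fin 3 → ℝ) × (Fin 3 → ℝ)}
    (hf : Differentiable ℝ f) (hg : Differentiable ℝ g) (hgz : g z ≠ 0)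
    (v : (Fin 3 → ℝ) × (Fin 3 → ℝ)) :
    fderiv ℝ (fun w => f w / g w) z v =
      (fderiv ℝ f z v * g z - f z * fderiv ℝ g z v) / g z ^ 2 := by
  have hd : DifferentiableAt ℝ (fun w => f w / g w) z := by
    simp only [div_eq_mul_inv]
    exact (hf z).mul ((hg z).inv hgz)
  have A := fline hd v
  have B := (fline (hf z) v).div (fline (hg z) v)
      (by show g (z + (0:ℝ) • v) ≠ 0; simpa using hgz)
  simp only [zero_smul, add_zero] at B
  exact A.unique B

/-- Carter theorem separating one degree of freedom from the other two: on ℝ⁶, if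
U₁, H₁ depend only on (x₁,p₁) (U₁ on x₁ alone), U₂₃, H₂₃ only on (x₂,x₃,p₂,p₃)
(U₂₃ on (x₂,x₃) alone), U₁ + U₂₃ nowhere zero and H = (H₁ + H₂₃)/(2(U₁+U₂₃)), then
κ = (U₁H₂₃ − U₂₃H₁)/(U₁+U₂₃) Poisson-commutes with H. -/
theorem stmt4 (H₁ U₁ H₂₃ U₂₃ : (Fin 3 → ℝ) × (Fin 3 → ℝ) → ℝ)
    (hH₁s : ContDiff ℝ (⊤ : ℕ∞) H₁) (hU₁s : ContDiff ℝ (⊤ : ℕ∞) U₁)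
    (hH₂₃s : ContDiff ℝ (⊤ : ℕ∞) H₂₃) (hU₂₃s : ContDiff ℝ (⊤ : ℕ∞) U₂₃)
    (hH₁dep : ∃ h : ℝ × ℝ → ℝ, ∀ z, H₁ z = h (z.1 0, z.2 0))
    (hU₁dep : ∃ u : ℝ → ℝ, ∀ z, U₁ z = u (z.1 0))
    (hH₂₃dep : ∃ h : (ℝ × ℝ) × (ℝ × ℝ) → ℝ, ∀ z, H₂₃ z = h ((z.1 1, z.1 2), (z.2 1, z.2 2)))
    (hU₂₃dep : ∃ u : ℝ × ℝ → ℝ, ∀ z, U₂₃ z = u (z.1 1, z.1 2))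
    (hU : ∀ z, U₁ z + U₂₃ z ≠ 0) :
    ∀ z, pb (fun w => (U₁ w * H₂₃ w - U₂₃ w * H₁ w) / (U₁ w + U₂₃ w))
      (fun w => (H₁ w + H₂₃ w) / (2 * (U₁ w + U₂₃ w))) z = 0 := by
  intro z
  obtain ⟨h1, hh1⟩ := hH₁dep
  obtain ⟨u1, hu1⟩ := hU₁dep
  obtain ⟨h2, hh2⟩ := hH₂₃dep
  obtain ⟨u2, hu2⟩ := hU₂₃dep
  have hUz := hU z
  have h2Uz : (2:ℝ) * (U₁ z + U₂₃ z) ≠ 0 := mul_ne_zero two_ne_zero hUz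
  -- vanishing directional derivatives from the dependence hypotheses
  have zH₁x : ∀ i : Fin 3, i ≠ 0 → fderiv ℝ H₁ z ((Pi.single i 1 : Fin 3 → ℝ), 0) = 0 := by
    intro i hi; apply dzero hH₁s; intro t
    simp [hh1, Prod.fst_add, Prod.snd_add, Pi.single_eq_of_ne (Ne.symm hi)]
  have zH₁p : ∀ i : Fin 3, i ≠ 0 → fderiv ℝ H₁ z ((0 : Fin 3 → ℝ), Pi.single i 1) = 0 := by
    intro i hi; apply dzero hH₁s; intro t
    simp [hh1, Prod.fst_add, Prod.snd_add, Pi.single_eq_of_ne (Ne.symm hi)]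
  have zU₁x : ∀ i : Fin 3, i ≠ 0 → fderiv ℝ U₁ z ((Pi.single i 1 : Fin 3 → ℝ), 0) = 0 := by
    intro i hi; apply dzero hU₁s; intro t
    simp [hu1, Prod.fst_add, Pi.single_eq_of_ne (Ne.symm hi)]
  have zU₁p : ∀ i : Fin 3, fderiv ℝ U₁ z ((0 : Fin 3 → ℝ), Pi.single i 1) = 0 := by
    intro i; apply dzero hU₁s; intro t
    simp [hu1, Prod.fst_add]
  have zH₂₃x : fderiv ℝ H₂₃ z ((Pi.single (0 : Fin 3) 1 : Fin 3 → ℝ), 0) = 0 := by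
    apply dzero hH₂₃s; intro t
    simp [hh2, Prod.fst_add, Prod.snd_add, Pi.single_eq_of_ne]
  have zH₂₃p : fderiv ℝ H₂₃ z ((0 : Fin 3 → ℝ), Pi.single (0 : Fin 3) 1) = 0 := by
    apply dzero hH₂₃s; intro t
    simp [hh2, Prod.fst_add, Prod.snd_add, Pi.single_eq_of_ne]
  have zU₂₃x : fderiv ℝ U₂₃ z ((Pi.single (0 : Fin 3) 1 : Fin 3 → ℝ), 0) = 0 := by
    apply dzero hU₂₃s; intro t
    simp [hu2, Prod.fst_add, Pi.single_eq_of_ne]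
  have zU₂₃p : ∀ i : Fin 3, fderiv ℝ U₂₃ z ((0 : Fin 3 → ℝ), Pi.single i 1) = 0 := by
    intro i; apply dzero hU₂₃s; intro t
    simp [hu2, Prod.fst_add]
  -- differentiability
  have DH₁ : Differentiable ℝ H₁ := hH₁s.differentiable (by simp)
  have DU₁ : Differentiable ℝ U₁ := hU₁s.differentiable (by simp)
  have DH₂₃ : Differentiable ℝ H₂₃ := hH₂₃s.differentiable (by simp)
  have DU₂₃ : Differentiable ℝ U₂₃ := hU₂₃s.differentiable (by simp)
  have DF : Differentiable ℝ (fun w => U₁ w * H₂₃ w - U₂₃ w * H₁ w) :=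
    (DU₁.mul DH₂₃).sub (DU₂₃.mul DH₁)
  have DG : Differentiable ℝ (fun w => U₁ w + U₂₃ w) := DU₁.add DU₂₃
  have DS : Differentiable ℝ (fun w => H₁ w + H₂₃ w) := DH₁.add DH₂₃
  have DG2 : Differentiable ℝ (fun w => 2 * (U₁ w + U₂₃ w)) := DG.const_mul 2
  -- derivatives of the building blocks
  have fF : ∀ v, fderiv ℝ (fun w => U₁ w * H₂₃ w - U₂₃ w * H₁ w) z v =
      U₁ z * fderiv ℝ H₂₃ z v + H₂₃ z * fderiv ℝ U₁ z v
        - (U₂₃ z * fderiv ℝ H₁ z v + H₁ z * fderiv ℝ U₂₃ z v) := by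
    intro v
    rw [fderiv_fun_sub (f := fun w => U₁ w * H₂₃ w) (g := fun w => U₂₃ w * H₁ w) ((DU₁ z).mul (DH₂₃ z)) ((DU₂₃ z).mul (DH₁ z)),
      fderiv_fun_mul (DU₁ z) (DH₂₃ z), fderiv_fun_mul (DU₂₃ z) (DH₁ z)]
    simp [ContinuousLinearMap.add_apply, ContinuousLinearMap.sub_apply,
      ContinuousLinearMap.smul_apply, smul_eq_mul]
  have fG : ∀ v, fderiv ℝ (fun w => U₁ w + U₂₃ w) z v =
      fderiv ℝ U₁ z v + fderiv ℝ U₂₃ z v := by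
    intro v
    rw [fderiv_fun_add (DU₁ z) (DU₂₃ z)]; rfl
  have fS : ∀ v, fderiv ℝ (fun w => H₁ w + H₂₃ w) z v =
      fderiv ℝ H₁ z v + fderiv ℝ H₂₃ z v := by
    intro v
    rw [fderiv_fun_add (DH₁ z) (DH₂₃ z)]; rfl
  have fG2 : ∀ v, fderiv ℝ (fun w => 2 * (U₁ w + U₂₃ w)) z v =
      2 * (fderiv ℝ U₁ z v + fderiv ℝ U₂₃ z v) := by
    intro v
    rw [fderiv_const_mul (DG z) 2]
    simp only [ContinuousLinearMap.smul_apply, smul_eq_mul, fG v]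
  have kκ := keydiv DF DG hUz
  have kH := keydiv DS DG2 h2Uz
  simp only [pb, Fin.sum_univ_three]
  rw [kκ, kκ, kκ, kκ, kκ, kκ, kH, kH, kH, kH, kH, kH]
  simp only [fF, fG, fS, fG2]
  rw [zH₁x 1 (by decide), zH₁x 2 (by decide), zH₁p 1 (by decide), zH₁p 2 (by decide),
    zU₁x 1 (by decide), zU₁x 2 (by decide), zU₁p 0, zU₁p 1, zU₁p 2,
    zH₂₃x, zH₂₃p, zU₂₃x, zU₂₃p 0, zU₂₃p 1, zU₂₃p 2]
  field_simp
  ring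
end

section
/- On ℝ⁴ with coordinates (σ, τ, p_σ, p_τ), σ² + τ² > 0, the Hamiltonian H = (p_σ² + p_τ² + τ⁴ − σ⁴)/(σ² + τ²) Poisson-commutes with K₁ = (σ²(p_τ² + τ⁴) − τ²(p_σ² − σ⁴))/(σ² + τ²). -/
/-!
`H = (A + B)/(a + b)` is of Liouville type, with `A = p_σ² − σ⁴`, `a = σ²` functions of the pair
`(σ, p_σ)` and `B = p_τ² + τ⁴`, `b = τ²` functions of `(τ, p_τ)`, and `K₁ = (a B − b A)/(a + b)` is
its Liouville integral. Near any point off `a + b = 0` one has `K₁ = B − b H`, so by the Leibniz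
rule `{H, K₁} = {H, B} − H {H, b}`. Expanding `{(a + b) H, B} = {A + B, B}` and
`{(a + b) H, b} = {A + B, b}`, where all brackets between functions of different pairs vanish, gives
`(a + b) {H, B} = −H {b, B}` and `(a + b) {H, b} = {B, b}`, hence `(a + b) {H, K₁} = 0`.
-/

open Filter Topology Finset

section PoissonBracket

variable {n : ℕ} {f g h : (Fin n → ℝ) × (Fin n → ℝ) → ℝ} {z : (Fin n → ℝ) × (Fin n → ℝ)}

theorem pb_comm (f g : (Fin n → ℝ) × (Fin n → ℝ) → ℝ) (z : (Fin n → ℝ) × (Fin n → ℝ)) :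
    pb f g z = -pb g f z := by
  simp only [pb, ← sum_neg_distrib]
  exact sum_congr rfl fun _ _ => by ring

theorem pb_self (f : (Fin n → ℝ) × (Fin n → ℝ) → ℝ) (z : (Fin n → ℝ) × (Fin n → ℝ)) :
    pb f f z = 0 := by
  linarith [pb_comm f f z]

theorem pb_congr_right (hg : g =ᶠ[𝓝 z] h) : pb f g z = pb f h z := by
  simp only [pb, hg.fderiv_eq]

theorem pb_congr_left (hf : f =ᶠ[𝓝 z] g) : pb f h z = pb g h z := by
  rw [pb_comm, pb_congr_right hf, ← pb_comm]

theorem pb_add_right (hg : DifferentiableAt ℝ g z) (hh : DifferentiableAt ℝ h z) :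
    pb f (fun w => g w + h w) z = pb f g z + pb f h z := by
  simp only [pb, fderiv_fun_add hg hh, ← sum_add_distrib]
  exact sum_congr rfl fun _ _ => by simp only [add_apply]; ring

theorem pb_add_left (hf : DifferentiableAt ℝ f z) (hg : DifferentiableAt ℝ g z) :
    pb (fun w => f w + g w) h z = pb f h z + pb g h z := by
  rw [pb_comm, pb_add_right hf hg, pb_comm h f, pb_comm h g]; ring

theorem pb_sub_right (hg : DifferentiableAt ℝ g z) (hh : DifferentiableAt ℝ h z) :
    pb f (fun w => g w - h w) z = pb f g z - pb f h z := by
  simp only [pb, fderiv_fun_sub hg hh, ← sum_sub_distrib]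
  exact sum_congr rfl fun _ _ => by simp only [sub_apply]; ring

theorem pb_mul_right (hg : DifferentiableAt ℝ g z) (hh : DifferentiableAt ℝ h z) :
    pb f (fun w => g w * h w) z = pb f g z * h z + g z * pb f h z := by
  simp only [pb, fderiv_fun_mul hg hh, sum_mul, mul_sum, ← sum_add_distrib]
  exact sum_congr rfl fun _ _ => by
    simp only [add_apply, smul_apply, smul_eq_mul]; ring

theorem pb_mul_left (hf : DifferentiableAt ℝ f z) (hg : DifferentiableAt ℝ g z) :
    pb (fun w => f w * g w) h z = f z * pb g h z + g z * pb f h z := by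
  rw [pb_comm, pb_mul_right hf hg, pb_comm h f, pb_comm h g]; ring

end PoissonBracket

theorem fderiv_apply_eq_zero_of_forall_add_smul {E : Type*} [NormedAddCommGroup E]
    [NormedSpace ℝ E] {f : E → ℝ} {x v : E} (hv : ∀ t : ℝ, f (x + t • v) = f x) :
    fderiv ℝ f x v = 0 := by
  by_cases hf : DifferentiableAt ℝ f x
  · rw [← hf.lineDeriv_eq_fderiv, lineDeriv, funext hv, deriv_const]
  · simp [fderiv_zero_of_not_differentiableAt hf]

def DependsOnlyOnPair {n : ℕ} (i : Fin n) (f : (Fin n → ℝ) × (Fin n → ℝ) → ℝ) : Prop :=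
  ∀ w w' : (Fin n → ℝ) × (Fin n → ℝ), w.1 i = w'.1 i → w.2 i = w'.2 i → f w = f w'

theorem DependsOnlyOnPair.fderiv_eq_zero {n : ℕ} {i k : Fin n}
    {f : (Fin n → ℝ) × (Fin n → ℝ) → ℝ} (hf : DependsOnlyOnPair i f) (hki : k ≠ i)
    (z : (Fin n → ℝ) × (Fin n → ℝ)) :
    fderiv ℝ f z (Pi.single k 1, 0) = 0 ∧ fderiv ℝ f z (0, Pi.single k 1) = 0 := by
  constructor <;> exact fderiv_apply_eq_zero_of_forall_add_smul fun t =>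
    hf _ _ (by simp [hki.symm]) (by simp [hki.symm])

theorem pb_eq_zero_of_dependsOnlyOnPair {n : ℕ} {i j : Fin n}
    {f g : (Fin n → ℝ) × (Fin n → ℝ) → ℝ} (hij : i ≠ j) (hf : DependsOnlyOnPair i f)
    (hg : DependsOnlyOnPair j g) (z : (Fin n → ℝ) × (Fin n → ℝ)) : pb f g z = 0 := by
  refine sum_eq_zero fun k _ => ?_
  by_cases hki : k = i
  · obtain ⟨hg₁, hg₂⟩ := hg.fderiv_eq_zero (hki ▸ hij) z
    rw [hg₁, hg₂]; ring
  · obtain ⟨hf₁, hf₂⟩ := hf.fderiv_eq_zero hki z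
    rw [hf₁, hf₂]; ring

theorem pb_liouville_integral_eq_zero {n : ℕ} {A B a b : (Fin n → ℝ) × (Fin n → ℝ) → ℝ}
    {z : (Fin n → ℝ) × (Fin n → ℝ)} (hA : DifferentiableAt ℝ A z) (hB : DifferentiableAt ℝ B z)
    (ha : DifferentiableAt ℝ a z) (hb : DifferentiableAt ℝ b z) (hD : a z + b z ≠ 0)
    (hAB : pb A B z = 0) (hAb : pb A b z = 0) (haB : pb a B z = 0) (hab : pb a b z = 0) :
    pb (fun w => (A w + B w) / (a w + b w)) (fun w => (a w * B w - b w * A w) / (a w + b w)) z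
      = 0 := by
  set H := fun w => (A w + B w) / (a w + b w)
  have hH : DifferentiableAt ℝ H z := by fun_prop (disch := exact hD)
  have hD_near : ∀ᶠ w in 𝓝 z, a w + b w ≠ 0 :=
    (ha.continuousAt.add hb.continuousAt).eventually_ne hD
  have hDH : (fun w => (a w + b w) * H w) =ᶠ[𝓝 z] fun w => A w + B w :=
    hD_near.mono fun w hw => mul_div_cancel₀ _ hw
  have hK : (fun w => (a w * B w - b w * A w) / (a w + b w)) =ᶠ[𝓝 z] fun w => B w - b w * H w :=
    hD_near.mono fun w hw => by simp only [H]; field_simp; ring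
  have hD_diff : DifferentiableAt ℝ (fun w => a w + b w) z := ha.add hb
  have hHB : (a z + b z) * pb H B z = -(H z * pb b B z) := by
    have h : pb (fun w => (a w + b w) * H w) B z
        = (a z + b z) * pb H B z + H z * pb (fun w => a w + b w) B z := pb_mul_left hD_diff hH
    rw [pb_congr_left hDH, pb_add_left hA hB, pb_add_left ha hb, hAB, haB, pb_self] at h
    linarith
  have hHb : (a z + b z) * pb H b z = pb B b z := by
    have h : pb (fun w => (a w + b w) * H w) b z
        = (a z + b z) * pb H b z + H z * pb (fun w => a w + b w) b z := pb_mul_left hD_diff hH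
    rw [pb_congr_left hDH, pb_add_left hA hB, pb_add_left ha hb, hAb, hab, pb_self] at h
    linarith
  have hHK : pb H (fun w => B w - b w * H w) z = pb H B z - H z * pb H b z := by
    rw [pb_sub_right (h := fun w => b w * H w) hB (hb.mul hH), pb_mul_right hb hH, pb_self]
    ring
  refine (mul_eq_zero.mp ?_).resolve_left hD
  rw [pb_congr_right hK, hHK, mul_sub, hHB, mul_left_comm, hHb, pb_comm b B]
  ring

-- Coordinates: σ = z.1 0, τ = z.1 1, p_σ = z.2 0, p_τ = z.2 1.
/-- Rotational-parabolic Hamiltonian H = (p_σ² + p_τ² + τ⁴ − σ⁴)/(σ² + τ²)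
Poisson-commutes with K₁ = (σ²(p_τ² + τ⁴) − τ²(p_σ² − σ⁴))/(σ² + τ²), away from
σ = τ = 0. Coordinates: σ = z.1 0, τ = z.1 1, p_σ = z.2 0, p_τ = z.2 1. -/
theorem stmt9 :
    ∀ z : (Fin 2 → ℝ) × (Fin 2 → ℝ), 0 < (z.1 0) ^ 2 + (z.1 1) ^ 2 →
    pb (fun w => ((w.2 0) ^ 2 + (w.2 1) ^ 2 + (w.1 1) ^ 4 - (w.1 0) ^ 4)
          / ((w.1 0) ^ 2 + (w.1 1) ^ 2))
       (fun w => ((w.1 0) ^ 2 * ((w.2 1) ^ 2 + (w.1 1) ^ 4)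
          - (w.1 1) ^ 2 * ((w.2 0) ^ 2 - (w.1 0) ^ 4))
          / ((w.1 0) ^ 2 + (w.1 1) ^ 2)) z = 0 := by
  intro z hz
  have hA : DependsOnlyOnPair (0 : Fin 2) fun w => (w.2 0) ^ 2 - (w.1 0) ^ 4 := by
    intro w w' h₁ h₂; dsimp only; rw [h₁, h₂]
  have ha : DependsOnlyOnPair (0 : Fin 2) fun w => (w.1 0) ^ 2 := by
    intro w w' h₁ _; dsimp only; rw [h₁]
  have hB : DependsOnlyOnPair (1 : Fin 2) fun w => (w.2 1) ^ 2 + (w.1 1) ^ 4 := by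
    intro w w' h₁ h₂; dsimp only; rw [h₁, h₂]
  have hb : DependsOnlyOnPair (1 : Fin 2) fun w => (w.1 1) ^ 2 := by
    intro w w' h₁ _; dsimp only; rw [h₁]
  convert pb_liouville_integral_eq_zero (by fun_prop) (by fun_prop) (by fun_prop) (by fun_prop)
    hz.ne' (pb_eq_zero_of_dependsOnlyOnPair zero_ne_one hA hB z)
    (pb_eq_zero_of_dependsOnlyOnPair zero_ne_one hA hb z)
    (pb_eq_zero_of_dependsOnlyOnPair zero_ne_one ha hB z)
    (pb_eq_zero_of_dependsOnlyOnPair zero_ne_one ha hb z) using 3 with w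
  ring
end

section
/- With H and I₁ as in the spherical-coordinate Hamiltonian H = (1/2)(p_r² + p_θ²/r² + p_φ²/(r²sin²θ)) − k/r + k₁/(r²sin²θcos²φ) + k₂/(r²sin²θsin²φ), the quantity I₂ = (1/2)p_φ² + k₁/cos²φ + k₂/sin²φ Poisson-commutes with both I₁ and H. -/
section PhaseSpace

variable {n : ℕ}

def DependsOnlyOn (S : Set (Fin n)) (f : (Fin n → ℝ) × (Fin n → ℝ) → ℝ) : Prop :=
  ∀ w w' : (Fin n → ℝ) × (Fin n → ℝ), (∀ i ∈ S, w.1 i = w'.1 i ∧ w.2 i = w'.2 i) → f w = f w'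

variable {S : Set (Fin n)} {f g a b : (Fin n → ℝ) × (Fin n → ℝ) → ℝ}
  {v : (Fin n → ℝ) × (Fin n → ℝ)}

theorem DependsOnlyOn.apply_add_smul (hf : DependsOnlyOn S f)
    (hv : ∀ i ∈ S, v.1 i = 0 ∧ v.2 i = 0) (z : (Fin n → ℝ) × (Fin n → ℝ)) (t : ℝ) :
    f (z + t • v) = f z :=
  hf _ _ fun i hi => by simp [(hv i hi).1, (hv i hi).2]

theorem DependsOnlyOn.fderiv_apply_eq_zero (hf : DependsOnlyOn S f)
    (hv : ∀ i ∈ S, v.1 i = 0 ∧ v.2 i = 0) (z : (Fin n → ℝ) × (Fin n → ℝ)) :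
    fderiv ℝ f z v = 0 := by
  by_cases hfd : DifferentiableAt ℝ f z
  · rw [← hfd.lineDeriv_eq_fderiv, lineDeriv, funext (hf.apply_add_smul hv z), deriv_const]
  · rw [fderiv_zero_of_not_differentiableAt hfd, zero_apply]

theorem fderiv_apply_eq_mul_of_eq_add_mul (hg : ∀ w, g w = a w + b w * f w)
    (ha : DependsOnlyOn S a) (hb : DependsOnlyOn S b) (hv : ∀ i ∈ S, v.1 i = 0 ∧ v.2 i = 0)
    {z : (Fin n → ℝ) × (Fin n → ℝ)} (hfd : DifferentiableAt ℝ f z)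
    (hgd : DifferentiableAt ℝ g z) :
    fderiv ℝ g z v = b z * fderiv ℝ f z v := by
  have hline : HasLineDerivAt ℝ g (b z * fderiv ℝ f z v) z v := by
    have := ((hfd.hasFDerivAt.hasLineDerivAt v).const_mul (b z)).const_add (a z)
    refine this.congr_of_eventuallyEq (Filter.Eventually.of_forall fun t => ?_)
    dsimp only
    rw [hg, ha.apply_add_smul hv, hb.apply_add_smul hv]
  exact (hgd.hasFDerivAt.hasLineDerivAt v).unique hline

theorem pb_eq_zero_of_eq_add_mul {j : Fin n} (hf : DependsOnlyOn {j} f)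
    (ha : DependsOnlyOn {j}ᶜ a) (hb : DependsOnlyOn {j}ᶜ b) (hg : ∀ w, g w = a w + b w * f w)
    (z : (Fin n → ℝ) × (Fin n → ℝ)) :
    pb f g z = 0 := by
  -- Where `f` or `g` is not differentiable, `fderiv` is `0` and every term vanishes.
  by_cases hd : DifferentiableAt ℝ f z ∧ DifferentiableAt ℝ g z
  swap
  · rcases not_and_or.mp hd with hd | hd <;> simp [pb, fderiv_zero_of_not_differentiableAt hd]
  obtain ⟨hfd, hgd⟩ := hd
  have hq : ∀ i ∈ ({j}ᶜ : Set (Fin n)),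
      (Pi.single j 1 : Fin n → ℝ) i = 0 ∧ (0 : Fin n → ℝ) i = 0 := fun i hi =>
    ⟨Pi.single_eq_of_ne hi 1, rfl⟩
  have hp : ∀ i ∈ ({j}ᶜ : Set (Fin n)),
      (0 : Fin n → ℝ) i = 0 ∧ (Pi.single j 1 : Fin n → ℝ) i = 0 := fun i hi =>
    ⟨rfl, Pi.single_eq_of_ne hi 1⟩
  rw [pb, Finset.sum_eq_single j]
  · rw [fderiv_apply_eq_mul_of_eq_add_mul (v := (Pi.single j 1, 0)) hg ha hb hq hfd hgd,
      fderiv_apply_eq_mul_of_eq_add_mul (v := (0, Pi.single j 1)) hg ha hb hp hfd hgd]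
    ring
  · intro i _ hij
    have hsingle : ∀ k ∈ ({j} : Set (Fin n)), (Pi.single i 1 : Fin n → ℝ) k = 0 := by
      rintro k rfl
      exact Pi.single_eq_of_ne' hij 1
    rw [hf.fderiv_apply_eq_zero fun k hk => ⟨hsingle k hk, rfl⟩,
      hf.fderiv_apply_eq_zero fun k hk => ⟨rfl, hsingle k hk⟩]
    ring
  · simp

end PhaseSpace

/-- Coordinates: r = z.1 0, θ = z.1 1, φ = z.1 2, with momenta z.2 in the same order. -/
theorem stmt12 (k k₁ k₂ : ℝ) :
    ∀ z : (Fin 3 → ℝ) × (Fin 3 → ℝ), 0 < z.1 0 → Real.sin (z.1 1) ≠ 0 →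
      Real.cos (z.1 2) ≠ 0 → Real.sin (z.1 2) ≠ 0 →
    pb (fun w => (1 / 2) * (w.2 2) ^ 2 + k₁ / Real.cos (w.1 2) ^ 2
          + k₂ / Real.sin (w.1 2) ^ 2)
       (fun w => (1 / 2) * ((w.2 1) ^ 2 + (w.2 2) ^ 2 / Real.sin (w.1 1) ^ 2)
          + k₁ / (Real.sin (w.1 1) ^ 2 * Real.cos (w.1 2) ^ 2)
          + k₂ / (Real.sin (w.1 1) ^ 2 * Real.sin (w.1 2) ^ 2)) z = 0 ∧
    pb (fun w => (1 / 2) * (w.2 2) ^ 2 + k₁ / Real.cos (w.1 2) ^ 2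
          + k₂ / Real.sin (w.1 2) ^ 2)
       (fun w => (1 / 2) * ((w.2 0) ^ 2 + (w.2 1) ^ 2 / (w.1 0) ^ 2
          + (w.2 2) ^ 2 / ((w.1 0) ^ 2 * Real.sin (w.1 1) ^ 2))
          - k / (w.1 0)
          + k₁ / ((w.1 0) ^ 2 * Real.sin (w.1 1) ^ 2 * Real.cos (w.1 2) ^ 2)
          + k₂ / ((w.1 0) ^ 2 * Real.sin (w.1 1) ^ 2 * Real.sin (w.1 2) ^ 2)) z = 0 := by
  intro z _ _ _ _
  have hI₂ : DependsOnlyOn {2} fun w : (Fin 3 → ℝ) × (Fin 3 → ℝ) =>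
      (1 / 2) * (w.2 2) ^ 2 + k₁ / Real.cos (w.1 2) ^ 2 + k₂ / Real.sin (w.1 2) ^ 2 :=
    fun w w' h => by simp only [(h 2 rfl).1, (h 2 rfl).2]
  have h0 : (0 : Fin 3) ∈ ({2}ᶜ : Set (Fin 3)) := by decide
  have h1 : (1 : Fin 3) ∈ ({2}ᶜ : Set (Fin 3)) := by decide
  refine ⟨pb_eq_zero_of_eq_add_mul hI₂ (a := fun w => (1 / 2) * (w.2 1) ^ 2)
    (b := fun w => 1 / Real.sin (w.1 1) ^ 2) ?_ ?_ (fun w => by ring) z,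
    pb_eq_zero_of_eq_add_mul hI₂
    (a := fun w => (1 / 2) * ((w.2 0) ^ 2 + (w.2 1) ^ 2 / (w.1 0) ^ 2) - k / (w.1 0))
    (b := fun w => 1 / ((w.1 0) ^ 2 * Real.sin (w.1 1) ^ 2)) ?_ ?_ (fun w => by ring) z⟩
  all_goals
    intro w w' h
    simp only [(h 0 h0).1, (h 0 h0).2, (h 1 h1).1, (h 1 h1).2]
end

section
/- On the domain ξ > 0, η > 0 with conjugate momenta p_ξ, p_η, p_φ, let I₂ = (1/2)p_φ² + k₁/cos²φ + k₂/sin²φ and H = (1/(2(η² + ξ²)))(p_ξ² + p_η² − 4k + (1/η² + 1/ξ²)·2I₂). Then I₄ = (η²(p_ξ² + 2I₂/ξ² − 2k) − ξ²(p_η² + 2I₂/η² − 2k))/(η² + ξ²) satisfies {H, I₄} = 0. -/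
/-- I₂ = (1/2)p_φ² + k₁/cos²φ + k₂/sin²φ, viewed in rotational-parabolic coordinates.
Coordinates: ξ = z.1 0, η = z.1 1, φ = z.1 2 with momenta p_ξ = z.2 0, p_η = z.2 1,
p_φ = z.2 2. -/
noncomputable def Itwo (k₁ k₂ : ℝ) (w : (Fin 3 → ℝ) × (Fin 3 → ℝ)) : ℝ :=
  (1 / 2) * (w.2 2) ^ 2 + k₁ / Real.cos (w.1 2) ^ 2 + k₂ / Real.sin (w.1 2) ^ 2

abbrev PhaseSpace (n : ℕ) := (Fin n → ℝ) × (Fin n → ℝ)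

namespace LinearMap.BilinForm.IsAlt

variable {R M : Type*} [CommRing R] [AddCommGroup M] [Module R M] {ω : LinearMap.BilinForm R M}

/-- When `a, b, u, v` are the differentials of `A, B, U, V`, the two arguments are `(U + V)²` times
the differentials of `(A + B) / (U + V)` and `(V A - U B) / (U + V)`. -/
theorem liouville (hω : ω.IsAlt) {A B U V : R} {a b u v : M}
    (hab : ω a b = 0) (huv : ω u v = 0) (hav : ω a v = 0) (hbu : ω b u = 0) :
    ω ((U + V) • (a + b) - (A + B) • (u + v))
      ((U + V) • (V • a + A • v - (U • b + B • u)) - (V * A - U * B) • (u + v)) = 0 := by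
  have swap (x y : M) : ω y x = -ω x y := (hω.neg_eq x y).symm
  have hba : ω b a = 0 := by rw [swap, hab, neg_zero]
  have hvu : ω v u = 0 := by rw [swap, huv, neg_zero]
  have hva : ω v a = 0 := by rw [swap, hav, neg_zero]
  have hub : ω u b = 0 := by rw [swap, hbu, neg_zero]
  simp only [map_add, map_sub, map_smul, LinearMap.add_apply, LinearMap.sub_apply,
    LinearMap.smul_apply, smul_eq_mul, hω.self_eq_zero, hab, huv, hav, hbu, hba, hvu, hva, hub,
    swap u a, swap v b]
  ring

end LinearMap.BilinForm.IsAlt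

theorem HasFDerivAt.div {𝕜 E : Type*} [NontriviallyNormedField 𝕜] [NormedAddCommGroup E]
    [NormedSpace 𝕜 E] {c d : E → 𝕜} {c' d' : E →L[𝕜] 𝕜} {x : E}
    (hc : HasFDerivAt c c' x) (hd : HasFDerivAt d d' x) (hx : d x ≠ 0) :
    HasFDerivAt (fun y => c y / d y) ((d x ^ 2)⁻¹ • (d x • c' - c x • d')) x := by
  have hinv : HasFDerivAt (fun y => (d y)⁻¹) (-(d x ^ 2)⁻¹ • d') x :=
    (hasDerivAt_inv hx).comp_hasFDerivAt x hd
  simp only [div_eq_mul_inv]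
  refine (hc.fun_mul hinv).congr_fderiv (ContinuousLinearMap.ext fun v => ?_)
  simp only [add_apply, smul_apply, smul_eq_mul, neg_mul, mul_neg, sub_apply]
  field_simp
  ring

noncomputable def sympForm (n : ℕ) : LinearMap.BilinForm ℝ (PhaseSpace n →L[ℝ] ℝ) :=
  LinearMap.mk₂ ℝ
    (fun f g => ∑ i, (f (Pi.single i 1, 0) * g (0, Pi.single i 1)
      - f (0, Pi.single i 1) * g (Pi.single i 1, 0)))
    (fun _ _ _ => by
      simp only [add_apply, ← Finset.sum_add_distrib]
      exact Finset.sum_congr rfl fun _ _ => by ring)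
    (fun _ _ _ => by
      simp only [smul_apply, smul_eq_mul, Finset.mul_sum]
      exact Finset.sum_congr rfl fun _ _ => by ring)
    (fun _ _ _ => by
      simp only [add_apply, ← Finset.sum_add_distrib]
      exact Finset.sum_congr rfl fun _ _ => by ring)
    (fun _ _ _ => by
      simp only [smul_apply, smul_eq_mul, Finset.mul_sum]
      exact Finset.sum_congr rfl fun _ _ => by ring)

theorem sympForm_apply {n : ℕ} (f g : PhaseSpace n →L[ℝ] ℝ) :
    sympForm n f g = ∑ i, (f (Pi.single i 1, 0) * g (0, Pi.single i 1)
      - f (0, Pi.single i 1) * g (Pi.single i 1, 0)) := rfl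

theorem sympForm_isAlt (n : ℕ) : (sympForm n).IsAlt := fun f => by
  simp only [sympForm_apply, mul_comm, sub_self, Finset.sum_const_zero]

theorem pb_eq_sympForm {n : ℕ} (f g : PhaseSpace n → ℝ) (z : PhaseSpace n) :
    pb f g z = sympForm n (fderiv ℝ f z) (fderiv ℝ g z) := rfl

theorem pb_liouville {n : ℕ} {A B U V : PhaseSpace n → ℝ} {z : PhaseSpace n}
    (hA : DifferentiableAt ℝ A z) (hB : DifferentiableAt ℝ B z)
    (hU : DifferentiableAt ℝ U z) (hV : DifferentiableAt ℝ V z) (hS : U z + V z ≠ 0)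
    (hAB : pb A B z = 0) (hUV : pb U V z = 0) (hAV : pb A V z = 0) (hBU : pb B U z = 0) :
    pb (fun w => (A w + B w) / (U w + V w)) (fun w => (V w * A w - U w * B w) / (U w + V w))
      z = 0 := by
  have hS' := hU.hasFDerivAt.fun_add hV.hasFDerivAt
  have hH := (hA.hasFDerivAt.fun_add hB.hasFDerivAt).div hS' hS
  have hI := ((hV.hasFDerivAt.fun_mul hA.hasFDerivAt).fun_sub
    (hU.hasFDerivAt.fun_mul hB.hasFDerivAt)).div hS' hS
  rw [pb_eq_sympForm, hH.fderiv, hI.fderiv]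
  simp only [map_smul, LinearMap.smul_apply, (sympForm_isAlt n).liouville hAB hUV hAV hBU,
    smul_zero]

namespace PhaseSpace

variable {n : ℕ}

noncomputable def pos (i : Fin n) : PhaseSpace n →L[ℝ] ℝ :=
  (ContinuousLinearMap.proj i).comp (ContinuousLinearMap.fst ℝ _ _)

noncomputable def mom (i : Fin n) : PhaseSpace n →L[ℝ] ℝ :=
  (ContinuousLinearMap.proj i).comp (ContinuousLinearMap.snd ℝ _ _)

noncomputable def coords (i : Fin n) : PhaseSpace n →L[ℝ] ℝ × ℝ := (pos i).prod (mom i)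

@[simp] theorem pos_apply (i : Fin n) (w : PhaseSpace n) : pos i w = w.1 i := rfl

@[simp] theorem mom_apply (i : Fin n) (w : PhaseSpace n) : mom i w = w.2 i := rfl

@[simp] theorem coords_apply (i : Fin n) (w : PhaseSpace n) : coords i w = (w.1 i, w.2 i) := rfl

end PhaseSpace

open PhaseSpace

theorem pb_comp_fst_comp_fst {n : ℕ} {f g : (Fin n → ℝ) → ℝ} {z : PhaseSpace n}
    (hf : DifferentiableAt ℝ f z.1) (hg : DifferentiableAt ℝ g z.1) :
    pb (fun w => f w.1) (fun w => g w.1) z = 0 := by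
  have hf' : HasFDerivAt (fun w : PhaseSpace n => f w.1)
      (fderiv ℝ f z.1 ∘L ContinuousLinearMap.fst ℝ _ _) z :=
    hf.hasFDerivAt.comp z hasFDerivAt_fst
  have hg' : HasFDerivAt (fun w : PhaseSpace n => g w.1)
      (fderiv ℝ g z.1 ∘L ContinuousLinearMap.fst ℝ _ _) z :=
    hg.hasFDerivAt.comp z hasFDerivAt_fst
  rw [pb_eq_sympForm, hf'.fderiv, hg'.fderiv, sympForm_apply]
  simp

theorem fderiv_comp_coords_apply_eq_zero {n : ℕ} {F : ℝ × ℝ → ℝ} {j : Fin n} {z : PhaseSpace n}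
    (hF : DifferentiableAt ℝ F (z.1 j, z.2 j)) {v : PhaseSpace n} (hv₁ : v.1 j = 0)
    (hv₂ : v.2 j = 0) : fderiv ℝ (fun w => F (w.1 j, w.2 j)) z v = 0 := by
  have h : HasFDerivAt (fun w : PhaseSpace n => F (w.1 j, w.2 j)) (fderiv ℝ F _ ∘L coords j) z :=
    hF.hasFDerivAt.comp z (coords j).hasFDerivAt
  rw [h.fderiv]
  simp [hv₁, hv₂, Prod.mk_zero_zero]

section Itwo

variable {k₁ k₂ : ℝ} {z : PhaseSpace 3}

theorem differentiableAt_Itwo_profile {φ p : ℝ} (hs : Real.sin φ ≠ 0) (hc : Real.cos φ ≠ 0) :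
    DifferentiableAt ℝ
      (fun x : ℝ × ℝ => 1 / 2 * x.2 ^ 2 + k₁ / Real.cos x.1 ^ 2 + k₂ / Real.sin x.1 ^ 2) (φ, p) := by
  fun_prop (disch := simpa)

theorem differentiableAt_Itwo (hs : Real.sin (z.1 2) ≠ 0) (hc : Real.cos (z.1 2) ≠ 0) :
    DifferentiableAt ℝ (Itwo k₁ k₂) z := by
  unfold Itwo
  fun_prop (disch := simpa)

theorem fderiv_Itwo_apply_eq_zero (hs : Real.sin (z.1 2) ≠ 0) (hc : Real.cos (z.1 2) ≠ 0)
    {v : PhaseSpace 3} (hv₁ : v.1 2 = 0) (hv₂ : v.2 2 = 0) : fderiv ℝ (Itwo k₁ k₂) z v = 0 :=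
  fderiv_comp_coords_apply_eq_zero (differentiableAt_Itwo_profile hs hc) hv₁ hv₂

end Itwo

noncomputable def separatedTerm (k k₁ k₂ : ℝ) (i : Fin 3) (w : PhaseSpace 3) : ℝ :=
  w.2 i ^ 2 + 2 * Itwo k₁ k₂ w / w.1 i ^ 2 - 2 * k

section separatedTerm

variable {k k₁ k₂ : ℝ} {z : PhaseSpace 3}

theorem hasFDerivAt_separatedTerm {i : Fin 3} (hi : z.1 i ≠ 0) (hs : Real.sin (z.1 2) ≠ 0)
    (hc : Real.cos (z.1 2) ≠ 0) :
    HasFDerivAt (separatedTerm k k₁ k₂ i)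
      ((2 * z.2 i) • mom i + (2 / z.1 i ^ 2) • fderiv ℝ (Itwo k₁ k₂) z
        - (4 * Itwo k₁ k₂ z / z.1 i ^ 3) • pos i) z := by
  have hI := (differentiableAt_Itwo (k₁ := k₁) (k₂ := k₂) hs hc).hasFDerivAt
  have h := (((mom i).hasFDerivAt.pow 2).fun_add
    ((hI.const_mul 2).div ((pos i).hasFDerivAt.pow 2) (pow_ne_zero 2 hi))).sub_const (2 * k)
  refine h.congr_fderiv (ContinuousLinearMap.ext fun v => ?_)
  simp only [mom_apply, Nat.add_one_sub_one, pow_one, nsmul_eq_mul, Nat.cast_ofNat, pos_apply,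
    add_apply, smul_apply, smul_eq_mul, sub_apply]
  field_simp
  ring

theorem pb_separatedTerm_zero_one (h₀ : z.1 0 ≠ 0) (h₁ : z.1 1 ≠ 0)
    (hs : Real.sin (z.1 2) ≠ 0) (hc : Real.cos (z.1 2) ≠ 0) :
    pb (separatedTerm k k₁ k₂ 0) (separatedTerm k k₁ k₂ 1) z = 0 := by
  rw [pb_eq_sympForm, (hasFDerivAt_separatedTerm h₀ hs hc).fderiv,
    (hasFDerivAt_separatedTerm h₁ hs hc).fderiv, sympForm_apply, Fin.sum_univ_three]
  simp only [Fin.isValue, sub_apply, add_apply, smul_apply, mom_apply, pos_apply, Pi.zero_apply,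
    smul_eq_mul, ne_eq, Fin.reduceEq, not_false_eq_true, Pi.single_eq_of_ne, Pi.single_eq_same,
    fderiv_Itwo_apply_eq_zero hs hc, mul_zero, zero_mul, mul_one, add_zero, zero_add, sub_zero,
    zero_sub, sub_self, mul_neg, neg_zero, one_ne_zero, zero_ne_one]
  ring

theorem pb_separatedTerm_sq {i j : Fin 3} (hij : i ≠ j) (hj : j ≠ 2) (hi : z.1 i ≠ 0)
    (hs : Real.sin (z.1 2) ≠ 0) (hc : Real.cos (z.1 2) ≠ 0) :
    pb (separatedTerm k k₁ k₂ i) (fun w => 2 * w.1 j ^ 2) z = 0 := by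
  have hU : HasFDerivAt (fun w : PhaseSpace 3 => 2 * w.1 j ^ 2) ((4 * z.1 j) • pos j) z := by
    refine (((pos j).hasFDerivAt.pow 2).const_mul 2).congr_fderiv
      (ContinuousLinearMap.ext fun v => ?_)
    simp only [pos_apply, Nat.add_one_sub_one, pow_one, nsmul_eq_mul, Nat.cast_ofNat, smul_apply,
      smul_eq_mul]
    ring
  rw [pb_eq_sympForm, (hasFDerivAt_separatedTerm hi hs hc).fderiv, hU.fderiv, sympForm_apply]
  simp [Pi.single_apply, fderiv_Itwo_apply_eq_zero hs hc, hij, hj]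

end separatedTerm

/-- H = (1/(2(η²+ξ²)))(p_ξ² + p_η² − 4k + (1/η² + 1/ξ²)·2I₂) Poisson-commutes with
I₄ = (η²(p_ξ² + 2I₂/ξ² − 2k) − ξ²(p_η² + 2I₂/η² − 2k))/(η² + ξ²) on the domain
ξ, η > 0, sin φ ≠ 0, cos φ ≠ 0. -/
theorem stmt13 (k k₁ k₂ : ℝ) :
    ∀ z : (Fin 3 → ℝ) × (Fin 3 → ℝ), 0 < z.1 0 → 0 < z.1 1 →
      Real.sin (z.1 2) ≠ 0 → Real.cos (z.1 2) ≠ 0 →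
    pb (fun w => (1 / (2 * ((w.1 1) ^ 2 + (w.1 0) ^ 2)))
          * ((w.2 0) ^ 2 + (w.2 1) ^ 2 - 4 * k
            + (1 / (w.1 1) ^ 2 + 1 / (w.1 0) ^ 2) * (2 * Itwo k₁ k₂ w)))
       (fun w => ((w.1 1) ^ 2 * ((w.2 0) ^ 2 + 2 * Itwo k₁ k₂ w / (w.1 0) ^ 2 - 2 * k)
          - (w.1 0) ^ 2 * ((w.2 1) ^ 2 + 2 * Itwo k₁ k₂ w / (w.1 1) ^ 2 - 2 * k))
          / ((w.1 1) ^ 2 + (w.1 0) ^ 2)) z = 0 := by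
  intro z hξ hη hs hc
  have hU : DifferentiableAt ℝ (fun q : Fin 3 → ℝ => 2 * q 0 ^ 2) z.1 := by fun_prop
  have hV : DifferentiableAt ℝ (fun q : Fin 3 → ℝ => 2 * q 1 ^ 2) z.1 := by fun_prop
  convert pb_liouville (A := separatedTerm k k₁ k₂ 0) (B := separatedTerm k k₁ k₂ 1)
    (U := fun w => 2 * w.1 0 ^ 2) (V := fun w => 2 * w.1 1 ^ 2)
    (hasFDerivAt_separatedTerm hξ.ne' hs hc).differentiableAt
    (hasFDerivAt_separatedTerm hη.ne' hs hc).differentiableAt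
    (hU.comp z differentiableAt_fst) (hV.comp z differentiableAt_fst) (by positivity)
    (pb_separatedTerm_zero_one hξ.ne' hη.ne' hs hc) (pb_comp_fst_comp_fst hU hV)
    (pb_separatedTerm_sq (by decide) (by decide) hξ.ne' hs hc)
    (pb_separatedTerm_sq (by decide) (by decide) hη.ne' hs hc) using 2
  · funext w
    simp only [separatedTerm]
    ring
  · funext w
    rw [← mul_div_mul_left _ _ (two_ne_zero' ℝ)]
    simp only [separatedTerm]
    ring
end

section
/- On ℝ⁶ with canonical Poisson bracket, if U₁,U₂,U₃ depend only on x₁,x₂,x₃ respectively, Hᵢ depends only on (xᵢ,pᵢ), U = U₁+U₂+U₃ is nowhere zero, and H = (H₁+H₂+H₃)/(2U), then κ₁ = 2U₁H − H₁ and κ₂ = 2U₂H − H₂ both Poisson-commute with H: {H,κ₁} = {H,κ₂} = 0. -/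
set_option maxHeartbeats 2000000 in
/-- 3-degree-of-freedom Carter theorem: with Uᵢ depending only on xᵢ, Hᵢ only on
(xᵢ,pᵢ), U = U₁+U₂+U₃ nowhere zero and H = (H₁+H₂+H₃)/(2U), both κ₁ = 2U₁H − H₁ and
κ₂ = 2U₂H − H₂ Poisson-commute with H. Coordinates: xᵢ = z.1 i, pᵢ = z.2 i. -/
theorem stmt15 (U₁ U₂ U₃ : ℝ → ℝ) (H₁ H₂ H₃ : ℝ × ℝ → ℝ)
    (hU₁ : ContDiff ℝ (⊤ : ℕ∞) U₁) (hU₂ : ContDiff ℝ (⊤ : ℕ∞) U₂) (hU₃ : ContDiff ℝ (⊤ : ℕ∞) U₃)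
    (hH₁ : ContDiff ℝ (⊤ : ℕ∞) H₁) (hH₂ : ContDiff ℝ (⊤ : ℕ∞) H₂) (hH₃ : ContDiff ℝ (⊤ : ℕ∞) H₃)
    (hU : ∀ z : (Fin 3 → ℝ) × (Fin 3 → ℝ),
      U₁ (z.1 0) + U₂ (z.1 1) + U₃ (z.1 2) ≠ 0) :
    ∀ z : (Fin 3 → ℝ) × (Fin 3 → ℝ),
    pb (fun w => (H₁ (w.1 0, w.2 0) + H₂ (w.1 1, w.2 1) + H₃ (w.1 2, w.2 2))
          / (2 * (U₁ (w.1 0) + U₂ (w.1 1) + U₃ (w.1 2))))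
       (fun w => 2 * U₁ (w.1 0) * ((H₁ (w.1 0, w.2 0) + H₂ (w.1 1, w.2 1) + H₃ (w.1 2, w.2 2))
          / (2 * (U₁ (w.1 0) + U₂ (w.1 1) + U₃ (w.1 2)))) - H₁ (w.1 0, w.2 0)) z = 0 ∧
    pb (fun w => (H₁ (w.1 0, w.2 0) + H₂ (w.1 1, w.2 1) + H₃ (w.1 2, w.2 2))
          / (2 * (U₁ (w.1 0) + U₂ (w.1 1) + U₃ (w.1 2))))
       (fun w => 2 * U₂ (w.1 1) * ((H₁ (w.1 0, w.2 0) + H₂ (w.1 1, w.2 1) + H₃ (w.1 2, w.2 2))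
          / (2 * (U₁ (w.1 0) + U₂ (w.1 1) + U₃ (w.1 2)))) - H₂ (w.1 1, w.2 1)) z = 0 := by
  intro z
  have hne : (2:ℝ) * (U₁ (z.1 0) + U₂ (z.1 1) + U₃ (z.1 2)) ≠ 0 :=
    mul_ne_zero two_ne_zero (hU z)
  -- coordinate CLMs
  let X : Fin 3 → ((Fin 3 → ℝ) × (Fin 3 → ℝ) →L[ℝ] ℝ) := fun i =>
    (ContinuousLinearMap.proj i).comp (ContinuousLinearMap.fst ℝ (Fin 3 → ℝ) (Fin 3 → ℝ))
  let P : Fin 3 → ((Fin 3 → ℝ) × (Fin 3 → ℝ) →L[ℝ] ℝ) := fun i =>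
    (ContinuousLinearMap.proj i).comp (ContinuousLinearMap.snd ℝ (Fin 3 → ℝ) (Fin 3 → ℝ))
  let Q : Fin 3 → ((Fin 3 → ℝ) × (Fin 3 → ℝ) →L[ℝ] ℝ × ℝ) := fun i => (X i).prod (P i)
  have hQ : ∀ i, HasFDerivAt (fun w : (Fin 3 → ℝ) × (Fin 3 → ℝ) => (w.1 i, w.2 i)) (Q i) z :=
    fun i => (Q i).hasFDerivAt
  have hX : ∀ i, HasFDerivAt (fun w : (Fin 3 → ℝ) × (Fin 3 → ℝ) => w.1 i) (X i) z :=
    fun i => (X i).hasFDerivAt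
  have h1 : HasFDerivAt (fun w : (Fin 3 → ℝ) × (Fin 3 → ℝ) => H₁ (w.1 0, w.2 0))
      ((fderiv ℝ H₁ (z.1 0, z.2 0)).comp (Q 0)) z :=
    ((hH₁.differentiable (by simp) (z.1 0, z.2 0)).hasFDerivAt).comp z (hQ 0)
  have h2 : HasFDerivAt (fun w : (Fin 3 → ℝ) × (Fin 3 → ℝ) => H₂ (w.1 1, w.2 1))
      ((fderiv ℝ H₂ (z.1 1, z.2 1)).comp (Q 1)) z :=
    ((hH₂.differentiable (by simp) (z.1 1, z.2 1)).hasFDerivAt).comp z (hQ 1)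
  have h3 : HasFDerivAt (fun w : (Fin 3 → ℝ) × (Fin 3 → ℝ) => H₃ (w.1 2, w.2 2))
      ((fderiv ℝ H₃ (z.1 2, z.2 2)).comp (Q 2)) z :=
    ((hH₃.differentiable (by simp) (z.1 2, z.2 2)).hasFDerivAt).comp z (hQ 2)
  have hu1 : HasFDerivAt (fun w : (Fin 3 → ℝ) × (Fin 3 → ℝ) => U₁ (w.1 0))
      ((fderiv ℝ U₁ (z.1 0)).comp (X 0)) z :=
    ((hU₁.differentiable (by simp) (z.1 0)).hasFDerivAt).comp z (hX 0)
  have hu2 : HasFDerivAt (fun w : (Fin 3 → ℝ) × (Fin 3 → ℝ) => U₂ (w.1 1))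
      ((fderiv ℝ U₂ (z.1 1)).comp (X 1)) z :=
    ((hU₂.differentiable (by simp) (z.1 1)).hasFDerivAt).comp z (hX 1)
  have hu3 : HasFDerivAt (fun w : (Fin 3 → ℝ) × (Fin 3 → ℝ) => U₃ (w.1 2))
      ((fderiv ℝ U₃ (z.1 2)).comp (X 2)) z :=
    ((hU₃.differentiable (by simp) (z.1 2)).hasFDerivAt).comp z (hX 2)
  have hS := (h1.add h2).add h3
  have hT2 := ((hu1.add hu2).add hu3).const_mul (2:ℝ)
  have hInv := (hasDerivAt_inv hne).comp_hasFDerivAt z hT2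
  have hFmul := hS.mul hInv
  have hF : HasFDerivAt (fun w : (Fin 3 → ℝ) × (Fin 3 → ℝ) =>
      (H₁ (w.1 0, w.2 0) + H₂ (w.1 1, w.2 1) + H₃ (w.1 2, w.2 2))
        / (2 * (U₁ (w.1 0) + U₂ (w.1 1) + U₃ (w.1 2)))) _ z := hFmul
  have hK1 : HasFDerivAt (fun w : (Fin 3 → ℝ) × (Fin 3 → ℝ) =>
      2 * U₁ (w.1 0) * ((H₁ (w.1 0, w.2 0) + H₂ (w.1 1, w.2 1) + H₃ (w.1 2, w.2 2))
        / (2 * (U₁ (w.1 0) + U₂ (w.1 1) + U₃ (w.1 2)))) - H₁ (w.1 0, w.2 0)) _ z :=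
    ((hu1.const_mul (2:ℝ)).mul hF).sub h1
  have hK2 : HasFDerivAt (fun w : (Fin 3 → ℝ) × (Fin 3 → ℝ) =>
      2 * U₂ (w.1 1) * ((H₁ (w.1 0, w.2 0) + H₂ (w.1 1, w.2 1) + H₃ (w.1 2, w.2 2))
        / (2 * (U₁ (w.1 0) + U₂ (w.1 1) + U₃ (w.1 2)))) - H₂ (w.1 1, w.2 1)) _ z :=
    ((hu2.const_mul (2:ℝ)).mul hF).sub h2
  constructor
  · rw [pb, hF.fderiv, hK1.fderiv]
    simp only [X, P, Q, Fin.sum_univ_three, ContinuousLinearMap.add_apply,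
      ContinuousLinearMap.sub_apply, ContinuousLinearMap.smul_apply,
      ContinuousLinearMap.comp_apply, ContinuousLinearMap.prod_apply,
      ContinuousLinearMap.proj_apply, ContinuousLinearMap.coe_fst',
      ContinuousLinearMap.coe_snd', ContinuousLinearMap.coe_comp',
      Function.comp_apply, smul_eq_mul, Pi.single_apply, Fin.reduceEq,
      Prod.mk_zero_zero, map_zero, if_true, if_false, ite_true, ite_false,
      mul_zero, zero_mul, add_zero, zero_add, neg_neg, Pi.add_apply]
    have h0 := hU z
    field_simp
    ring
  · rw [pb, hF.fderiv, hK2.fderiv]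
    simp only [X, P, Q, Fin.sum_univ_three, ContinuousLinearMap.add_apply,
      ContinuousLinearMap.sub_apply, ContinuousLinearMap.smul_apply,
      ContinuousLinearMap.comp_apply, ContinuousLinearMap.prod_apply,
      ContinuousLinearMap.proj_apply, ContinuousLinearMap.coe_fst',
      ContinuousLinearMap.coe_snd', ContinuousLinearMap.coe_comp',
      Function.comp_apply, smul_eq_mul, Pi.single_apply, Fin.reduceEq,
      Prod.mk_zero_zero, map_zero, if_true, if_false, ite_true, ite_false,
      mul_zero, zero_mul, add_zero, zero_add, neg_neg, Pi.add_apply]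
    have h0 := hU z
    field_simp
    ring
end

section
/- Under the hypotheses of the 3-degree-of-freedom Carter theorem, the conserved quantities κ₁ = 2U₁H − H₁ and κ₂ = 2U₂H − H₂ Poisson-commute with each other: {κ₁, κ₂} = 0. -/
set_option maxHeartbeats 1000000

open ContinuousLinearMap


/-- Under the hypotheses of the 3-degree-of-freedom Carter theorem (Uᵢ functions of
xᵢ alone, Hᵢ of (xᵢ,pᵢ) alone, U = U₁+U₂+U₃ nowhere zero, H = (H₁+H₂+H₃)/(2U)),
the conserved quantities κ₁ = 2U₁H − H₁ and κ₂ = 2U₂H − H₂ Poisson-commute: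
{κ₁, κ₂} = 0. Coordinates: xᵢ = z.1 i, pᵢ = z.2 i. -/
theorem stmt16 (U₁ U₂ U₃ : ℝ → ℝ) (H₁ H₂ H₃ : ℝ × ℝ → ℝ)
    (hU₁ : ContDiff ℝ (⊤ : ℕ∞) U₁) (hU₂ : ContDiff ℝ (⊤ : ℕ∞) U₂) (hU₃ : ContDiff ℝ (⊤ : ℕ∞) U₃)
    (hH₁ : ContDiff ℝ (⊤ : ℕ∞) H₁) (hH₂ : ContDiff ℝ (⊤ : ℕ∞) H₂) (hH₃ : ContDiff ℝ (⊤ : ℕ∞) H₃)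
    (hU : ∀ z : (Fin 3 → ℝ) × (Fin 3 → ℝ),
      U₁ (z.1 0) + U₂ (z.1 1) + U₃ (z.1 2) ≠ 0) :
    ∀ z : (Fin 3 → ℝ) × (Fin 3 → ℝ),
    pb (fun w => 2 * U₁ (w.1 0) * ((H₁ (w.1 0, w.2 0) + H₂ (w.1 1, w.2 1) + H₃ (w.1 2, w.2 2))
          / (2 * (U₁ (w.1 0) + U₂ (w.1 1) + U₃ (w.1 2)))) - H₁ (w.1 0, w.2 0))
       (fun w => 2 * U₂ (w.1 1) * ((H₁ (w.1 0, w.2 0) + H₂ (w.1 1, w.2 1) + H₃ (w.1 2, w.2 2))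
          / (2 * (U₁ (w.1 0) + U₂ (w.1 1) + U₃ (w.1 2)))) - H₂ (w.1 1, w.2 1)) z = 0 := by
  intro z

  have hx : ∀ i : Fin 3, HasFDerivAt (fun w : (Fin 3 → ℝ) × (Fin 3 → ℝ) => w.1 i)
      ((ContinuousLinearMap.proj i).comp (ContinuousLinearMap.fst ℝ (Fin 3 → ℝ) (Fin 3 → ℝ))) z :=
    fun i => ((ContinuousLinearMap.proj i).comp
      (ContinuousLinearMap.fst ℝ (Fin 3 → ℝ) (Fin 3 → ℝ))).hasFDerivAt
  have hp : ∀ i : Fin 3, HasFDerivAt (fun w : (Fin 3 → ℝ) × (Fin 3 → ℝ) => w.2 i)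
      ((ContinuousLinearMap.proj i).comp (ContinuousLinearMap.snd ℝ (Fin 3 → ℝ) (Fin 3 → ℝ))) z :=
    fun i => ((ContinuousLinearMap.proj i).comp
      (ContinuousLinearMap.snd ℝ (Fin 3 → ℝ) (Fin 3 → ℝ))).hasFDerivAt
  have hL : ∀ i : Fin 3, HasFDerivAt (fun w : (Fin 3 → ℝ) × (Fin 3 → ℝ) => (w.1 i, w.2 i))
      (((ContinuousLinearMap.proj i).comp (ContinuousLinearMap.fst ℝ (Fin 3 → ℝ) (Fin 3 → ℝ))).prod
       ((ContinuousLinearMap.proj i).comp (ContinuousLinearMap.snd ℝ (Fin 3 → ℝ) (Fin 3 → ℝ)))) z :=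
    fun i => (hx i).prodMk (hp i)
  have hU1 : HasFDerivAt (fun w : (Fin 3 → ℝ) × (Fin 3 → ℝ) => U₁ (w.1 0)) _ z :=
    HasDerivAt.comp_hasFDerivAt z ((hU₁.differentiable (by simp) _).hasDerivAt) (hx 0)
  have hU2 : HasFDerivAt (fun w : (Fin 3 → ℝ) × (Fin 3 → ℝ) => U₂ (w.1 1)) _ z :=
    HasDerivAt.comp_hasFDerivAt z ((hU₂.differentiable (by simp) _).hasDerivAt) (hx 1)
  have hU3 : HasFDerivAt (fun w : (Fin 3 → ℝ) × (Fin 3 → ℝ) => U₃ (w.1 2)) _ z :=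
    HasDerivAt.comp_hasFDerivAt z ((hU₃.differentiable (by simp) _).hasDerivAt) (hx 2)
  have hH1 : HasFDerivAt (fun w : (Fin 3 → ℝ) × (Fin 3 → ℝ) => H₁ (w.1 0, w.2 0)) _ z :=
    HasFDerivAt.comp z ((hH₁.differentiable (by simp) _).hasFDerivAt) (hL 0)
  have hH2 : HasFDerivAt (fun w : (Fin 3 → ℝ) × (Fin 3 → ℝ) => H₂ (w.1 1, w.2 1)) _ z :=
    HasFDerivAt.comp z ((hH₂.differentiable (by simp) _).hasFDerivAt) (hL 1)
  have hH3 : HasFDerivAt (fun w : (Fin 3 → ℝ) × (Fin 3 → ℝ) => H₃ (w.1 2, w.2 2)) _ z :=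
    HasFDerivAt.comp z ((hH₃.differentiable (by simp) _).hasFDerivAt) (hL 2)
  have hS : HasFDerivAt
      (fun w : (Fin 3 → ℝ) × (Fin 3 → ℝ) => H₁ (w.1 0, w.2 0) + H₂ (w.1 1, w.2 1) + H₃ (w.1 2, w.2 2)) _ z :=
    (hH1.add hH2).add hH3
  have hDen : HasFDerivAt (fun w : (Fin 3 → ℝ) × (Fin 3 → ℝ) => 2 * (U₁ (w.1 0) + U₂ (w.1 1) + U₃ (w.1 2))) _ z :=
    ((hU1.add hU2).add hU3).const_mul 2
  have hDne : 2 * (U₁ (z.1 0) + U₂ (z.1 1) + U₃ (z.1 2)) ≠ 0 :=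
    mul_ne_zero two_ne_zero (hU z)
  have hinv : HasFDerivAt (fun w : (Fin 3 → ℝ) × (Fin 3 → ℝ) => (2 * (U₁ (w.1 0) + U₂ (w.1 1) + U₃ (w.1 2)))⁻¹) _ z :=
    HasDerivAt.comp_hasFDerivAt z (hasDerivAt_inv hDne) hDen
  have hQ : HasFDerivAt (fun w : (Fin 3 → ℝ) × (Fin 3 → ℝ) =>
      (H₁ (w.1 0, w.2 0) + H₂ (w.1 1, w.2 1) + H₃ (w.1 2, w.2 2)) *
        (2 * (U₁ (w.1 0) + U₂ (w.1 1) + U₃ (w.1 2)))⁻¹) _ z :=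
    hS.mul hinv
  have hK1 : HasFDerivAt (fun w : (Fin 3 → ℝ) × (Fin 3 → ℝ) =>
      2 * U₁ (w.1 0) * ((H₁ (w.1 0, w.2 0) + H₂ (w.1 1, w.2 1) + H₃ (w.1 2, w.2 2)) *
        (2 * (U₁ (w.1 0) + U₂ (w.1 1) + U₃ (w.1 2)))⁻¹) - H₁ (w.1 0, w.2 0)) _ z :=
    ((hU1.const_mul 2).mul hQ).sub hH1
  have hK2 : HasFDerivAt (fun w : (Fin 3 → ℝ) × (Fin 3 → ℝ) =>
      2 * U₂ (w.1 1) * ((H₁ (w.1 0, w.2 0) + H₂ (w.1 1, w.2 1) + H₃ (w.1 2, w.2 2)) *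
        (2 * (U₁ (w.1 0) + U₂ (w.1 1) + U₃ (w.1 2)))⁻¹) - H₂ (w.1 1, w.2 1)) _ z :=
    ((hU2.const_mul 2).mul hQ).sub hH2
  unfold pb
  simp only [div_eq_mul_inv]
  rw [hK1.fderiv, hK2.fderiv, Fin.sum_univ_three]
  simp only [ContinuousLinearMap.sub_apply, ContinuousLinearMap.add_apply,
    ContinuousLinearMap.smul_apply, ContinuousLinearMap.coe_comp', Function.comp_apply,
    ContinuousLinearMap.prod_apply, ContinuousLinearMap.coe_fst', ContinuousLinearMap.coe_snd',
    ContinuousLinearMap.proj_apply, smul_eq_mul, Pi.single_apply, Pi.zero_apply]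
  norm_num [Fin.ext_iff, Prod.mk_zero_zero]
  have hu := hU z
  set u1 := U₁ (z.1 0); set u2 := U₂ (z.1 1); set u3 := U₃ (z.1 2)
  set d1 := deriv U₁ (z.1 0); set d2 := deriv U₂ (z.1 1); set d3 := deriv U₃ (z.1 2)
  set h1 := H₁ (z.1 0, z.2 0); set h2 := H₂ (z.1 1, z.2 1); set h3 := H₃ (z.1 2, z.2 2)
  set a1 := (fderiv ℝ H₁ (z.1 0, z.2 0)) (1, 0); set b1 := (fderiv ℝ H₁ (z.1 0, z.2 0)) (0, 1)
  set a2 := (fderiv ℝ H₂ (z.1 1, z.2 1)) (1, 0); set b2 := (fderiv ℝ H₂ (z.1 1, z.2 1)) (0, 1)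
  set a3 := (fderiv ℝ H₃ (z.1 2, z.2 2)) (1, 0); set b3 := (fderiv ℝ H₃ (z.1 2, z.2 2)) (0, 1)
  field_simp
  ring
end

section
/- For any smooth functions A(ξ, p_ξ), B(η, p_η), and positive smooth functions u(ξ), v(η) on the domain ξ, η > 0, the functions H = (A + B)/(u + v) and K = (uB − vA)/(u + v) satisfy the identity A = uH − K and B = vH + K; consequently any two of {H, K, A, B} determine the other two, and {H, K} = 0 with respect to the canonical Poisson bracket. -/
noncomputable def Lmap (i : Fin 2) : ((Fin 2 → ℝ) × (Fin 2 → ℝ)) →L[ℝ] ℝ × ℝ :=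
  ((ContinuousLinearMap.proj i).comp (ContinuousLinearMap.fst ℝ (Fin 2 → ℝ) (Fin 2 → ℝ))).prod
  ((ContinuousLinearMap.proj i).comp (ContinuousLinearMap.snd ℝ (Fin 2 → ℝ) (Fin 2 → ℝ)))

noncomputable def Pmap (i : Fin 2) : ((Fin 2 → ℝ) × (Fin 2 → ℝ)) →L[ℝ] ℝ :=
  (ContinuousLinearMap.proj i).comp (ContinuousLinearMap.fst ℝ (Fin 2 → ℝ) (Fin 2 → ℝ))

/-- Carter's original 2-degree-of-freedom theorem packaged with the inversion
identities: for smooth A(ξ,p_ξ), B(η,p_η) and positive smooth u(ξ), v(η) on ξ,η > 0,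
setting H = (A+B)/(u+v) and K = (uB − vA)/(u+v), we have A = uH − K, B = vH + K, and
{H, K} = 0. Coordinates: ξ = z.1 0, η = z.1 1, p_ξ = z.2 0, p_η = z.2 1. -/
theorem stmt19 (A B : ℝ × ℝ → ℝ) (u v : ℝ → ℝ)
    (hA : ContDiff ℝ (⊤ : ℕ∞) A) (hB : ContDiff ℝ (⊤ : ℕ∞) B)
    (hu : ContDiff ℝ (⊤ : ℕ∞) u) (hv : ContDiff ℝ (⊤ : ℕ∞) v)
    (hupos : ∀ x, 0 < x → 0 < u x) (hvpos : ∀ x, 0 < x → 0 < v x) :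
    ∀ z : (Fin 2 → ℝ) × (Fin 2 → ℝ), 0 < z.1 0 → 0 < z.1 1 →
      (A (z.1 0, z.2 0) = u (z.1 0) *
          ((A (z.1 0, z.2 0) + B (z.1 1, z.2 1)) / (u (z.1 0) + v (z.1 1)))
        - (u (z.1 0) * B (z.1 1, z.2 1) - v (z.1 1) * A (z.1 0, z.2 0))
          / (u (z.1 0) + v (z.1 1))) ∧
      (B (z.1 1, z.2 1) = v (z.1 1) *
          ((A (z.1 0, z.2 0) + B (z.1 1, z.2 1)) / (u (z.1 0) + v (z.1 1)))
        + (u (z.1 0) * B (z.1 1, z.2 1) - v (z.1 1) * A (z.1 0, z.2 0))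
          / (u (z.1 0) + v (z.1 1))) ∧
      pb (fun w => (A (w.1 0, w.2 0) + B (w.1 1, w.2 1)) / (u (w.1 0) + v (w.1 1)))
         (fun w => (u (w.1 0) * B (w.1 1, w.2 1) - v (w.1 1) * A (w.1 0, w.2 0))
            / (u (w.1 0) + v (w.1 1))) z = 0 := by
  intro z hx hy
  have hS : u (z.1 0) + v (z.1 1) ≠ 0 :=
    ne_of_gt (add_pos (hupos _ hx) (hvpos _ hy))
  refine ⟨by field_simp; ring, by field_simp; ring, ?_⟩
  have ha : HasFDerivAt (fun w : (Fin 2 → ℝ) × (Fin 2 → ℝ) => A (w.1 0, w.2 0))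
      ((fderiv ℝ A (z.1 0, z.2 0)).comp (Lmap 0)) z :=
    HasFDerivAt.comp z (hA.differentiable (by simp) (z.1 0, z.2 0)).hasFDerivAt
      (Lmap 0).hasFDerivAt
  have hb : HasFDerivAt (fun w : (Fin 2 → ℝ) × (Fin 2 → ℝ) => B (w.1 1, w.2 1))
      ((fderiv ℝ B (z.1 1, z.2 1)).comp (Lmap 1)) z :=
    HasFDerivAt.comp z (hB.differentiable (by simp) (z.1 1, z.2 1)).hasFDerivAt
      (Lmap 1).hasFDerivAt
  have hu0 : HasFDerivAt (fun w : (Fin 2 → ℝ) × (Fin 2 → ℝ) => u (w.1 0))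
      ((fderiv ℝ u (z.1 0)).comp (Pmap 0)) z :=
    HasFDerivAt.comp z (hu.differentiable (by simp) (z.1 0)).hasFDerivAt
      (Pmap 0).hasFDerivAt
  have hv0 : HasFDerivAt (fun w : (Fin 2 → ℝ) × (Fin 2 → ℝ) => v (w.1 1))
      ((fderiv ℝ v (z.1 1)).comp (Pmap 1)) z :=
    HasFDerivAt.comp z (hv.differentiable (by simp) (z.1 1)).hasFDerivAt
      (Pmap 1).hasFDerivAt
  have hinv : HasFDerivAt (fun w : (Fin 2 → ℝ) × (Fin 2 → ℝ) => (u (w.1 0) + v (w.1 1))⁻¹)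
      ((ContinuousLinearMap.smulRight (1 : ℝ →L[ℝ] ℝ)
        (-((u (z.1 0) + v (z.1 1)) ^ 2)⁻¹)).comp
        ((fderiv ℝ u (z.1 0)).comp (Pmap 0) + (fderiv ℝ v (z.1 1)).comp (Pmap 1))) z :=
    HasFDerivAt.comp z (hasFDerivAt_inv hS) (hu0.add hv0)
  have hH := HasFDerivAt.mul (𝕜 := ℝ) (𝔸' := ℝ) (ha.add hb) hinv
  have hK := HasFDerivAt.mul (𝕜 := ℝ) (𝔸' := ℝ) ((HasFDerivAt.mul (𝕜 := ℝ) (𝔸' := ℝ) hu0 hb).sub (HasFDerivAt.mul (𝕜 := ℝ) (𝔸' := ℝ) hv0 ha)) hinv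
  simp only [pb, div_eq_mul_inv]
  rw [HasFDerivAt.fderiv (f := fun w : (Fin 2 → ℝ) × (Fin 2 → ℝ) => (A (w.1 0, w.2 0) + B (w.1 1, w.2 1)) * (u (w.1 0) + v (w.1 1))⁻¹) hH,
    HasFDerivAt.fderiv (f := fun w : (Fin 2 → ℝ) × (Fin 2 → ℝ) => (u (w.1 0) * B (w.1 1, w.2 1) - v (w.1 1) * A (w.1 0, w.2 0)) * (u (w.1 0) + v (w.1 1))⁻¹) hK]
  simp only [Fin.sum_univ_two]
  simp only [ContinuousLinearMap.add_apply, ContinuousLinearMap.sub_apply,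
    ContinuousLinearMap.comp_apply, ContinuousLinearMap.smul_apply,
    ContinuousLinearMap.smulRight_apply, ContinuousLinearMap.one_apply,
    ContinuousLinearMap.prod_apply, ContinuousLinearMap.proj_apply,
    ContinuousLinearMap.coe_fst', ContinuousLinearMap.coe_snd',
    Lmap, Pmap, Pi.single_apply, smul_eq_mul]
  norm_num
  set S := u (z.1 0) + v (z.1 1)
  set Aξ := fderiv ℝ A (z.1 0, z.2 0) (1, 0)
  set Ap := fderiv ℝ A (z.1 0, z.2 0) (0, 1)
  set Bη := fderiv ℝ B (z.1 1, z.2 1) (1, 0)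
  set Bp := fderiv ℝ B (z.1 1, z.2 1) (0, 1)
  field_simp
  simp only [S, Prod.mk_zero_zero, map_zero]
  ring
end
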